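/- For every integer k ≥ 2 and every nonnegative integer n, the number of partitions of n having at most k−1 successive N×(N+1) Durfee rectangles with no part below the last Durfee rectangle equals the number of anti-lecture hall compositions λ of weight n with λ₁ ≤ 2k−2 and ⌊λᵢ/i⌋ even for every i; that is, |R_k(n)| = |Q_{2k−2}(n)|. -/

import Mathlib

/-- `f : ℕ → ℕ` (with `f i` standing for `λ_{i+1}`) is an anti-lecture hall composition:
finitely many nonzero entries and `λ₁/1 ≥ λ₂/2 ≥ λ₃/3 ≥ ⋯ ≥ 0`, i.e.
`(i+1)·λ_i ≥ i·λ_{i+1}` for all `i ≥ 1`. -/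
def IsALH (f : ℕ → ℕ) : Prop :=
  (Function.support f).Finite ∧ ∀ i : ℕ, (i + 1) * f (i + 1) ≤ (i + 2) * f i

/-- The weight `|λ| = λ₁ + λ₂ + ⋯` of a composition. -/
noncomputable def wt (f : ℕ → ℕ) : ℕ := ∑ᶠ i, f i

/-- `F k n`: anti-lecture hall compositions of weight `n` whose first entry is at most `k`. -/
def Fset (k n : ℕ) : Set (ℕ → ℕ) := {f | IsALH f ∧ f 0 ≤ k ∧ wt f = n}

/-- `Q k n`: anti-lecture hall compositions `λ` of weight `n` with `λ₁ ≤ k` and `⌊λ_i/i⌋` even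
for every `i ≥ 1`. -/
def Qset (k n : ℕ) : Set (ℕ → ℕ) :=
  {f | IsALH f ∧ f 0 ≤ k ∧ (∀ i, Even (f i / (i + 1))) ∧ wt f = n}

/-- The size `N` of the `N × (N+1)` Durfee rectangle of a partition given as a weakly
decreasing list `L`: the largest `N` such that `λ_N ≥ N + 1`, i.e. the number of (0-based)
indices `i` with `L_i ≥ i + 2`. -/
def durfeeSize (L : List ℕ) : ℕ :=
  ((List.range L.length).filter fun i => i + 2 ≤ L.getD i 0).length

/-- Remove the rows of the Durfee rectangle, leaving the partition below it. -/
def durfeeStep (L : List ℕ) : List ℕ := L.drop (durfeeSize L)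

/-- `R k n`: partitions of `n` having at most `k-1` successive `N × (N+1)` Durfee rectangles
with no part below the last Durfee rectangle, i.e. the partition is exhausted after removing
(at most) `k-1` successive Durfee rectangles. -/
def Rset (k n : ℕ) : Set (Nat.Partition n) :=
  {p | durfeeStep^[k - 1] ((p.parts.sort (· ≤ ·)).reverse) = []}

namespace ALHDurfee

open Finset

/-! ### Conjugation of bounded antitone sequences -/

/-- Conjugate of the sequence `g`, counting indices in `[0, b)`. -/
def conjB (b : ℕ) (g : ℕ → ℕ) (t : ℕ) : ℕ :=
  ((Finset.range b).filter (fun j => t + 1 ≤ g j)).card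

lemma conjB_le (b : ℕ) (g : ℕ → ℕ) (t : ℕ) : conjB b g t ≤ b := by
  classical
  exact le_trans (Finset.card_filter_le _ _) (by simp)

lemma conjB_anti (b : ℕ) (g : ℕ → ℕ) {t t' : ℕ} (h : t ≤ t') :
    conjB b g t' ≤ conjB b g t := by
  classical
  apply Finset.card_le_card
  intro j hj
  simp only [Finset.mem_filter, Finset.mem_range] at hj ⊢
  omega

lemma conjB_congr {b : ℕ} {g g' : ℕ → ℕ} (h : ∀ j < b, g j = g' j) (t : ℕ) :
    conjB b g t = conjB b g' t := by
  classical
  unfold conjB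
  congr 1
  apply Finset.filter_congr
  intro j hj
  simp only [Finset.mem_range] at hj
  rw [h j hj]

lemma conjB_eq_zero {b c : ℕ} {g : ℕ → ℕ} (hb : ∀ j, g j ≤ c) {t : ℕ} (ht : c ≤ t) :
    conjB b g t = 0 := by
  classical
  unfold conjB
  rw [Finset.card_eq_zero, Finset.filter_eq_empty_iff]
  intro j _
  have := hb j
  omega

lemma le_conjB_iff {b : ℕ} {g : ℕ → ℕ} (hg : ∀ i j, i ≤ j → g j ≤ g i) (s t : ℕ) :
    s + 1 ≤ conjB b g t ↔ s < b ∧ t + 1 ≤ g s := by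
  classical
  constructor
  · intro hcard
    by_cases hsb : s < b
    · refine ⟨hsb, ?_⟩
      by_contra hgs
      push_neg at hgs
      have hsub : (Finset.range b).filter (fun j => t + 1 ≤ g j) ⊆ Finset.range s := by
        intro j hj
        simp only [Finset.mem_filter, Finset.mem_range] at hj ⊢
        by_contra hjs
        push_neg at hjs
        have := hg s j hjs
        omega
      have hle := Finset.card_le_card hsub
      rw [Finset.card_range] at hle
      unfold conjB at hcard
      omega
    · exfalso
      have := conjB_le b g t
      omega
  · rintro ⟨hsb, hgs⟩
    have hsub : Finset.range (s + 1) ⊆ (Finset.range b).filter (fun j => t + 1 ≤ g j) := by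
      intro j hj
      simp only [Finset.mem_range] at hj
      simp only [Finset.mem_filter, Finset.mem_range]
      exact ⟨by omega, le_trans hgs (hg j s (by omega))⟩
    have := Finset.card_le_card hsub
    simpa [conjB] using this

lemma conjB_conjB {b c : ℕ} {g : ℕ → ℕ} (hg : ∀ i j, i ≤ j → g j ≤ g i)
    (hs : ∀ j, b ≤ j → g j = 0) (hv : ∀ j, g j ≤ c) (s : ℕ) :
    conjB c (conjB b g) s = g s := by
  classical
  by_cases hsb : s < b
  · have key : ∀ t, (s + 1 ≤ conjB b g t) ↔ (t < g s) := by
      intro t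
      rw [le_conjB_iff hg]
      constructor
      · rintro ⟨_, h⟩; omega
      · intro h; exact ⟨hsb, by omega⟩
    have e1 : conjB c (conjB b g) s
        = ((Finset.range c).filter (fun t => t < g s)).card := by
      unfold conjB
      congr 1
      apply Finset.filter_congr
      intro t _
      exact key t
    rw [e1]
    have e2 : (Finset.range c).filter (fun t => t < g s) = Finset.range (g s) := by
      ext t
      simp only [Finset.mem_filter, Finset.mem_range]
      have := hv s
      omega
    rw [e2, Finset.card_range]
  · have hgs : g s = 0 := hs s (by omega)
    rw [hgs]
    rw [show conjB c (conjB b g) s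
        = ((Finset.range c).filter (fun t => s + 1 ≤ conjB b g t)).card from rfl]
    rw [Finset.card_eq_zero, Finset.filter_eq_empty_iff]
    intro t _
    rw [le_conjB_iff hg]
    push_neg
    intro h
    exact absurd h hsb

lemma sum_conjB {b c : ℕ} {g : ℕ → ℕ} (hv : ∀ j, j < b → g j ≤ c) :
    ∑ t ∈ Finset.range c, conjB b g t = ∑ j ∈ Finset.range b, g j := by
  classical
  unfold conjB
  have : ∀ t, ((Finset.range b).filter (fun j => t + 1 ≤ g j)).card
      = ∑ j ∈ Finset.range b, if t + 1 ≤ g j then 1 else 0 := by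
    intro t
    rw [Finset.card_filter]
  simp_rw [this]
  rw [Finset.sum_comm]
  apply Finset.sum_congr rfl
  intro j hj
  simp only [Finset.mem_range] at hj
  have h1 : ∀ t, (if t + 1 ≤ g j then 1 else 0) = if t < g j then 1 else 0 := by
    intro t; rfl
  simp_rw [h1]
  rw [← Finset.card_filter]
  have : (Finset.range c).filter (fun t => t < g j) = Finset.range (g j) := by
    ext t
    simp only [Finset.mem_filter, Finset.mem_range]
    have := hv j hj
    omega
  rw [this, Finset.card_range]

/-! ### The key arithmetic lemma for anti-lecture hall steps -/

lemma alh_step_iff {A q1 r1 q2 r2 : ℕ} (h1 : r1 < A) (h2 : r2 < A + 1) :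
    A * ((A + 1) * q2 + r2) ≤ (A + 1) * (A * q1 + r1) ↔
      (q2 < q1 ∨ (q2 = q1 ∧ r2 ≤ r1)) := by
  constructor
  · intro h
    rcases lt_trichotomy q2 q1 with hq | hq | hq
    · exact Or.inl hq
    · subst hq
      refine Or.inr ⟨rfl, ?_⟩
      by_contra hr
      push_neg at hr
      nlinarith
    · exfalso
      have hX : A*(A+1)*(q1+1) ≤ A*(A+1)*q2 := Nat.mul_le_mul_left _ (by omega)
      have hr : (A+1)*(r1+1) ≤ (A+1)*A := Nat.mul_le_mul_left _ h1
      nlinarith [hX, hr, h]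
  · rintro (hq | ⟨rfl, hr⟩)
    · have hX : A*(A+1)*(q2+1) ≤ A*(A+1)*q1 := Nat.mul_le_mul_left _ (by omega)
      have hr2 : A*r2 ≤ A*A := Nat.mul_le_mul_left _ (by omega)
      nlinarith [hX, hr2]
    · nlinarith
/-! ### The `Q`-side predicate -/

/-- `f` is a bounded even-floor anti-lecture hall composition with `a₁ ≤ d`
and support contained in `[0, B)`. -/
def QOK (d B : ℕ) (f : ℕ → ℕ) : Prop :=
  (∀ i, B ≤ i → f i = 0) ∧ (∀ i, Even (f i / (i + 1))) ∧ f 0 ≤ 2 * d ∧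
  ∀ i, (i + 1) * f (i + 1) ≤ (i + 2) * f i

/-- The number of leading indices where `f i ≥ 2(i+1)`. -/
noncomputable def mQ (f : ℕ → ℕ) : ℕ := sInf {j | f j < 2 * (j + 1)}

/-! ### The `R`-side predicate -/

def ROK (d B : ℕ) (L : List ℕ) : Prop :=
  L.Pairwise (· ≥ ·) ∧ (∀ x ∈ L, 1 ≤ x ∧ x ≤ B + 1) ∧ durfeeStep^[d] L = []

/-! ### The two maps -/

noncomputable def toR : ℕ → ℕ → (ℕ → ℕ) → List ℕ
  | 0, _, _ => []
  | d + 1, B, f =>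
    let m := mQ f
    ((List.range m).map fun i => m + 1 + conjB (B - m) (fun j => f (m + j)) i)
      ++ toR d m (fun i => if i < m then f i - 2 * (i + 1) else 0)

def toQ : ℕ → List ℕ → (ℕ → ℕ)
  | 0, _ => fun _ => 0
  | d + 1, L =>
    let m := durfeeSize L
    fun i => if i < m then 2 * (i + 1) + toQ d (L.drop m) i
             else conjB m (fun j => L.getD j 0 - (m + 1)) (i - m)

/-! ### durfeeSize lemmas -/

lemma filter_range_lt (m N : ℕ) (h : m ≤ N) :
    ((List.range N).filter (fun i => decide (i < m))).length = m := by
  induction N with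
  | zero => interval_cases m; simp
  | succ N ih =>
    rcases Nat.lt_or_ge m (N+1) with hm | hm
    · have hmN : m ≤ N := by omega
      rw [List.range_succ, List.filter_append]
      simp only [List.filter_cons, List.filter_nil, decide_eq_true_eq]
      rw [if_neg (by omega)]
      simpa using ih hmN
    · have hm1 : m = N + 1 := by omega
      subst hm1
      rw [List.filter_eq_self.mpr]
      · simp
      · intro a ha
        simp only [List.mem_range] at ha
        simpa using ha
lemma dc_filter (p : ℕ → Bool) (hdc : ∀ i j, i ≤ j → p j = true → p i = true) :
    ∀ N, ∀ i < N, (p i = true ↔ i < ((List.range N).filter p).length) := by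
  intro N
  induction N with
  | zero => intro i hi; omega
  | succ N ih =>
    intro i hi
    by_cases hN : p N = true
    · have hall : ∀ a ∈ List.range (N+1), p a = true := by
        intro a ha
        simp only [List.mem_range] at ha
        exact hdc a N (by omega) hN
      rw [List.filter_eq_self.mpr hall]
      simp only [List.length_range]
      exact ⟨fun _ => hi, fun _ => hall i (by simp only [List.mem_range]; omega)⟩
    · have hnil : List.filter p [N] = [] := by
        simp only [List.filter_cons, List.filter_nil]
        rw [if_neg (by simp [hN])]
      rw [List.range_succ, List.filter_append, hnil, List.append_nil]
      rcases Nat.lt_or_ge i N with h' | h'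
      · exact ih i h'
      · have hiN : i = N := by omega
        subst hiN
        constructor
        · intro hc; exact absurd hc hN
        · intro hlen
          have hle : (List.filter p (List.range i)).length ≤ i := by
            have h2 := List.length_filter_le p (List.range i)
            simpa using h2
          omega
lemma durfeeSize_le_length (L : List ℕ) : durfeeSize L ≤ L.length := by
  unfold durfeeSize
  calc ((List.range L.length).filter _).length ≤ (List.range L.length).length :=
    List.length_filter_le _ _
  _ = L.length := List.length_range
lemma getD_anti {L : List ℕ} (hL : L.Pairwise (· ≥ ·)) {i j : ℕ} (h : i ≤ j) :
    L.getD j 0 ≤ L.getD i 0 := by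
  rcases Nat.lt_or_ge j L.length with hj | hj
  · have hi : i < L.length := by omega
    rw [List.getD_eq_getElem L 0 hj, List.getD_eq_getElem L 0 hi]
    rcases Nat.eq_or_lt_of_le h with rfl | hlt
    · exact le_refl _
    · exact List.pairwise_iff_get.mp hL ⟨i, hi⟩ ⟨j, hj⟩ hlt
  · rw [List.getD_eq_default L 0 hj]
    exact Nat.zero_le _
lemma durfeeSize_spec {L : List ℕ} (hL : L.Pairwise (· ≥ ·)) :
    (∀ i < durfeeSize L, i + 2 ≤ L.getD i 0) ∧
      (∀ i, durfeeSize L ≤ i → L.getD i 0 ≤ i + 1) := by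
  have hdc : ∀ i j, i ≤ j → (decide (j + 2 ≤ L.getD j 0)) = true →
      (decide (i + 2 ≤ L.getD i 0)) = true := by
    intro i j hij hj
    simp only [decide_eq_true_eq] at hj ⊢
    have := getD_anti hL hij
    omega
  have key := dc_filter (fun i => decide (i + 2 ≤ L.getD i 0)) hdc L.length
  constructor
  · intro i hi
    have hiL : i < L.length := lt_of_lt_of_le hi (durfeeSize_le_length L)
    have := (key i hiL).mpr hi
    simpa using this
  · intro i hi
    rcases Nat.lt_or_ge i L.length with hiL | hiL
    · have := (key i hiL)
      by_contra hcon
      push_neg at hcon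
      have h2 : (decide (i + 2 ≤ L.getD i 0)) = true := by
        simp only [decide_eq_true_eq]; omega
      have := this.mp h2
      unfold durfeeSize at hi
      omega
    · rw [List.getD_eq_default L 0 hiL]
      omega
lemma durfeeSize_eq (L : List ℕ) (m : ℕ) (hm : m ≤ L.length)
    (h1 : ∀ i < m, i + 2 ≤ L.getD i 0)
    (h2 : ∀ i, m ≤ i → i < L.length → L.getD i 0 < i + 2) :
    durfeeSize L = m := by
  unfold durfeeSize
  have : (List.range L.length).filter (fun i => decide (i + 2 ≤ L.getD i 0))
      = (List.range L.length).filter (fun i => decide (i < m)) := by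
    apply List.filter_congr
    intro i hi
    simp only [List.mem_range] at hi
    simp only [decide_eq_true_eq, decide_eq_decide]
    constructor
    · intro hle
      by_contra hc
      push_neg at hc
      have := h2 i hc hi
      omega
    · intro him
      exact h1 i him
  rw [this, filter_range_lt m L.length hm]
lemma take_eq_map_range (L : List ℕ) (m : ℕ) (hm : m ≤ L.length) :
    L.take m = (List.range m).map (fun i => L.getD i 0) := by
  apply List.ext_getElem
  · simp [hm]
  · intro i h1 h2
    simp only [List.getElem_take, List.getElem_map, List.getElem_range]
    have hi : i < L.length := by
      simp at h1; omega
    rw [List.getD_eq_getElem L 0 hi]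
lemma sum_eq_range_getD (L : List ℕ) :
    L.sum = ∑ i ∈ Finset.range L.length, L.getD i 0 := by
  induction L with
  | nil => simp
  | cons a t ih =>
    simp only [List.sum_cons, List.length_cons]
    rw [Finset.sum_range_succ']
    simp only [List.getD_cons_succ, List.getD_cons_zero]
    rw [ih]
    omega
/-! ### Q-side structure lemmas -/

section QStruct

variable {d B : ℕ} {f : ℕ → ℕ} (h : QOK d B f)

include h

lemma step_cases (i : ℕ) :
    f (i + 1) / (i + 2) < f i / (i + 1) ∨
      (f (i + 1) / (i + 2) = f i / (i + 1) ∧ f (i + 1) % (i + 2) ≤ f i % (i + 1)) := by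
  have halh := h.2.2.2 i
  have e1 : f i = (i + 1) * (f i / (i + 1)) + f i % (i + 1) :=
    (Nat.div_add_mod (f i) (i + 1)).symm
  have e2 : f (i + 1) = (i + 2) * (f (i + 1) / (i + 2)) + f (i + 1) % (i + 2) :=
    (Nat.div_add_mod (f (i + 1)) (i + 2)).symm
  have m1 : f i % (i + 1) < i + 1 := Nat.mod_lt _ (by omega)
  have m2 : f (i + 1) % (i + 2) < i + 2 := Nat.mod_lt _ (by omega)
  rw [← alh_step_iff (A := i + 1) m1 (by omega)]
  calc (i + 1) * ((i + 1 + 1) * (f (i + 1) / (i + 2)) + f (i + 1) % (i + 2))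
      = (i + 1) * f (i + 1) := by rw [show i + 1 + 1 = i + 2 from rfl, ← e2]
  _ ≤ (i + 2) * f i := halh
  _ = (i + 1 + 1) * ((i + 1) * (f i / (i + 1)) + f i % (i + 1)) := by
      rw [show i + 1 + 1 = i + 2 from rfl, ← e1]

lemma P_chain {i j : ℕ} (hij : i ≤ j) : f j / (j + 1) ≤ f i / (i + 1) := by
  induction j, hij using Nat.le_induction with
  | base => exact le_refl _
  | succ j hij ih =>
    have hstep : f (j + 1) / (j + 2) ≤ f j / (j + 1) := by
      rcases step_cases h j with h' | ⟨h', _⟩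
      · omega
      · omega
    calc f (j + 1) / (j + 1 + 1) = f (j + 1) / (j + 2) := rfl
    _ ≤ f j / (j + 1) := hstep
    _ ≤ f i / (i + 1) := ih

lemma mQ_mem : f (mQ f) < 2 * (mQ f + 1) := by
  have hne : {j | f j < 2 * (j + 1)}.Nonempty := by
    refine ⟨B, ?_⟩
    have := h.1 B (le_refl _)
    simp only [Set.mem_setOf_eq]
    omega
  exact Nat.sInf_mem hne

lemma mQ_le : mQ f ≤ B := by
  apply Nat.sInf_le
  have := h.1 B (le_refl _)
  simp only [Set.mem_setOf_eq]
  omega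

omit h in
lemma lt_mQ (i : ℕ) (hi : i < mQ f) : 2 * (i + 1) ≤ f i := by
  have := Nat.notMem_of_lt_sInf hi
  simp only [Set.mem_setOf_eq] at this
  omega

lemma mQ_le_imp (i : ℕ) (hi : mQ f ≤ i) : f i ≤ i := by
  have hlt := mQ_mem h
  have hdiv : f (mQ f) / (mQ f + 1) < 2 :=
    (Nat.div_lt_iff_lt_mul (by omega)).mpr (by omega)
  have hPm : f (mQ f) / (mQ f + 1) = 0 := by
    rcases h.2.1 (mQ f) with ⟨c, hc⟩
    omega
  have hPi : f i / (i + 1) = 0 := by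
    have hP := P_chain h hi
    rw [hPm] at hP
    exact Nat.le_zero.mp hP
  by_contra hc
  push_neg at hc
  have h1 : 1 ≤ f i / (i + 1) := (Nat.one_le_div_iff (by omega)).mpr (by omega)
  rw [hPi] at h1
  exact absurd h1 (by omega)

lemma tail_anti_succ (i : ℕ) (hi : mQ f ≤ i) : f (i + 1) ≤ f i := by
  have h1 : f i ≤ i := mQ_le_imp h i hi
  have h2 : f (i + 1) ≤ i + 1 := mQ_le_imp h (i + 1) (by omega)
  rcases step_cases h i with h' | ⟨_, h'⟩
  · exfalso
    have h0 : f i / (i + 1) = 0 := Nat.div_eq_of_lt (by omega)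
    rw [h0] at h'
    exact Nat.not_lt_zero _ h'
  · rw [Nat.mod_eq_of_lt (by omega : f (i + 1) < i + 2),
      Nat.mod_eq_of_lt (by omega : f i < i + 1)] at h'
    exact h'

lemma tail_anti {i j : ℕ} (hi : mQ f ≤ i) (hij : i ≤ j) : f j ≤ f i := by
  induction j, hij using Nat.le_induction with
  | base => exact le_refl _
  | succ j hij ih => exact le_trans (tail_anti_succ h j (by omega)) ih

end QStruct

/-! ### The four main lemmas -/

lemma qok_zero {B : ℕ} {f : ℕ → ℕ} (h : QOK 0 B f) : ∀ i, f i = 0 := by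
  intro i
  induction i with
  | zero => have := h.2.2.1; omega
  | succ i ih =>
    have h2 := h.2.2.2 i
    rw [ih] at h2
    have h3 : (i + 1) * f (i + 1) = 0 := by omega
    rcases Nat.mul_eq_zero.mp h3 with h4 | h4 <;> omega

lemma sum_map_range (h : ℕ → ℕ) (m : ℕ) :
    ((List.range m).map h).sum = ∑ i ∈ Finset.range m, h i := by
  induction m with
  | zero => simp
  | succ m ih =>
    rw [List.range_succ, List.map_append, List.sum_append, Finset.sum_range_succ, ih]
    simp

lemma sum_two_mul (m : ℕ) : ∑ i ∈ Finset.range m, 2 * (i + 1) = m * (m + 1) := by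
  induction m with
  | zero => simp
  | succ m ih => rw [Finset.sum_range_succ, ih]; ring

lemma getD_map_range {h : ℕ → ℕ} {m i : ℕ} (hi : i < m) :
    ((List.range m).map h).getD i 0 = h i := by
  rw [List.getD_eq_getElem _ _ (by simp [hi])]
  simp

lemma sum_range_split (g : ℕ → ℕ) (m B : ℕ) (h : m ≤ B) :
    ∑ i ∈ Finset.range B, g i
      = ∑ i ∈ Finset.range m, g i + ∑ j ∈ Finset.range (B - m), g (m + j) := by
  rw [Finset.range_eq_Ico, ← Finset.sum_Ico_consecutive g (Nat.zero_le m) h,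
    Finset.sum_Ico_eq_sum_range (f := g) (m := m) (n := B), ← Finset.range_eq_Ico]

lemma mainQR : ∀ d B f, QOK d B f →
    ROK d B (toR d B f) ∧ (toR d B f).sum = ∑ i ∈ Finset.range B, f i
      ∧ toQ d (toR d B f) = f := by
  intro d
  induction d with
  | zero =>
    intro B f h
    have hz := qok_zero h
    refine ⟨⟨by simp [toR], by simp [toR], by simp [toR]⟩, ?_, ?_⟩
    · show (0 : ℕ) = ∑ i ∈ Finset.range B, f i
      exact (Finset.sum_eq_zero fun i _ => hz i).symm
    · funext i
      show (0 : ℕ) = f i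
      exact (hz i).symm
  | succ d ih =>
    intro B f h
    obtain ⟨m, hm⟩ : ∃ m, mQ f = m := ⟨_, rfl⟩
    have hmB : m ≤ B := hm ▸ mQ_le h
    have hflow : ∀ i < m, 2 * (i + 1) ≤ f i := fun i hi => lt_mQ i (by omega)
    have hgle : ∀ j, f (m + j) ≤ m := by
      intro j
      have h1 : f (m + j) ≤ f m := tail_anti h (by omega) (by omega)
      have h2 : f m ≤ m := mQ_le_imp h m (by omega)
      omega
    have hganti : ∀ i j, i ≤ j → f (m + j) ≤ f (m + i) :=
      fun i j hij => tail_anti h (by omega) (by omega)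
    have hgsupp : ∀ j, B - m ≤ j → f (m + j) = 0 :=
      fun j hj => h.1 _ (by omega)
    have hf' : QOK d m (fun i => if i < m then f i - 2 * (i + 1) else 0) := by
      refine ⟨fun i hi => if_neg (by omega), ?_, ?_, ?_⟩
      · intro i
        by_cases hi : i < m
        · simp only [if_pos hi]
          have hq : 2 ≤ f i / (i + 1) :=
            (Nat.le_div_iff_mul_le (by omega)).mpr (by have := hflow i hi; omega)
          have e1 : f i = (i + 1) * (f i / (i + 1)) + f i % (i + 1) :=
            (Nat.div_add_mod _ _).symm
          have e2 : f i - 2 * (i + 1) = (i + 1) * (f i / (i + 1) - 2) + f i % (i + 1) := by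
            have e3 : (i + 1) * (f i / (i + 1) - 2)
                = (i + 1) * (f i / (i + 1)) - (i + 1) * 2 := Nat.mul_sub _ _ _
            have m1 : f i % (i + 1) < i + 1 := Nat.mod_lt _ (by omega)
            have hX : (i + 1) * 2 ≤ (i + 1) * (f i / (i + 1)) :=
              Nat.mul_le_mul_left _ hq
            rw [e3]
            obtain ⟨X, hXe⟩ : ∃ X, (i + 1) * (f i / (i + 1)) = X := ⟨_, rfl⟩
            rw [hXe] at e1 hX ⊢
            omega
          rw [e2, Nat.mul_add_div (by omega),
            Nat.div_eq_of_lt (Nat.mod_lt _ (by omega)), Nat.add_zero]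
          rcases h.2.1 i with ⟨c, hc⟩
          exact ⟨c - 1, by omega⟩
        · simp only [if_neg hi]
          simpa using (Even.zero (α := ℕ))
      · by_cases h0 : 0 < m
        · simp only [if_pos h0]
          have := h.2.2.1
          omega
        · simp only [if_neg (by omega : ¬ (0 < m))]
          omega
      · intro i
        by_cases hi : i + 1 < m
        · simp only [if_pos hi, if_pos (by omega : i < m)]
          have halh := h.2.2.2 i
          have b1 := hflow i (by omega)
          have b2 := hflow (i + 1) hi
          obtain ⟨x, hx⟩ : ∃ x, f i - 2 * (i + 1) = x := ⟨_, rfl⟩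
          obtain ⟨y, hy⟩ : ∃ y, f (i + 1) - 2 * (i + 2) = y := ⟨_, rfl⟩
          rw [hx, hy]
          have ex : f i = x + 2 * (i + 1) := by omega
          have ey : f (i + 1) = y + 2 * (i + 2) := by omega
          rw [ex, ey] at halh
          nlinarith [halh]
        · simp only [if_neg hi]
          simp
    have ihall := ih m (fun i => if i < m then f i - 2 * (i + 1) else 0) hf'
    obtain ⟨block, hblock⟩ : ∃ b, ((List.range m).map
        fun i => m + 1 + conjB (B - m) (fun j => f (m + j)) i) = b := ⟨_, rfl⟩
    obtain ⟨rest, hrest⟩ : ∃ r,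
        toR d m (fun i => if i < m then f i - 2 * (i + 1) else 0) = r := ⟨_, rfl⟩
    rw [hrest] at ihall
    have ihsum : rest.sum
        = ∑ i ∈ Finset.range m, (if i < m then f i - 2 * (i + 1) else 0) := ihall.2.1
    have hLdef : toR (d + 1) B f = block ++ rest := by
      rw [show toR (d + 1) B f = ((List.range (mQ f)).map
          fun i => mQ f + 1 + conjB (B - mQ f) (fun j => f (mQ f + j)) i)
          ++ toR d (mQ f) (fun i => if i < mQ f then f i - 2 * (i + 1) else 0) from rfl,
        hm, hblock, hrest]
    have hrest_rok : ROK d m rest := ihall.1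
    have hrest_mem : ∀ x ∈ rest, 1 ≤ x ∧ x ≤ m + 1 := hrest_rok.2.1
    have hblock_len : block.length = m := by rw [← hblock]; simp
    have hblock_getD : ∀ i < m,
        block.getD i 0 = m + 1 + conjB (B - m) (fun j => f (m + j)) i := by
      intro i hi
      rw [← hblock]
      exact getD_map_range hi
    have hblock_mem : ∀ x ∈ block, m + 1 ≤ x ∧ x ≤ B + 1 := by
      intro x hx
      rw [← hblock] at hx
      simp only [List.mem_map, List.mem_range] at hx
      obtain ⟨i, hi, rfl⟩ := hx
      have := conjB_le (B - m) (fun j => f (m + j)) i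
      omega
    have hblock_sorted : block.Pairwise (· ≥ ·) := by
      rw [← hblock]
      refine List.pairwise_map.mpr ((List.pairwise_lt_range (n := m)).imp ?_)
      intro a b hab
      have := conjB_anti (B - m) (fun j => f (m + j)) (le_of_lt hab)
      omega
    have hL_sorted : (block ++ rest).Pairwise (· ≥ ·) := by
      rw [List.pairwise_append]
      refine ⟨hblock_sorted, hrest_rok.1, ?_⟩
      intro x hx y hy
      have h1 := (hblock_mem x hx).1
      have h2 := (hrest_mem y hy).2
      omega
    have hL_getD_lt : ∀ i < m,
        (block ++ rest).getD i 0 = m + 1 + conjB (B - m) (fun j => f (m + j)) i := by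
      intro i hi
      rw [List.getD_append _ _ _ _ (by omega)]
      exact hblock_getD i hi
    have hL_getD_ge : ∀ i, m ≤ i → (block ++ rest).getD i 0 = rest.getD (i - m) 0 := by
      intro i hi
      rw [List.getD_append_right _ _ _ _ (by omega), hblock_len]
    have hrest_getD_le : ∀ j, rest.getD j 0 ≤ m + 1 := by
      intro j
      rcases Nat.lt_or_ge j rest.length with hj | hj
      · have hmem : rest.getD j 0 ∈ rest := by
          rw [List.getD_eq_getElem _ _ hj]
          exact List.getElem_mem hj
        exact (hrest_mem _ hmem).2
      · rw [List.getD_eq_default _ _ hj]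
        omega
    have hL_len : m ≤ (block ++ rest).length := by
      rw [List.length_append, hblock_len]
      omega
    have hds : durfeeSize (block ++ rest) = m := by
      apply durfeeSize_eq _ _ hL_len
      · intro i hi
        rw [hL_getD_lt i hi]
        omega
      · intro i hi _
        rw [hL_getD_ge i hi]
        have := hrest_getD_le (i - m)
        omega
    have hdrop : (block ++ rest).drop m = rest := by
      rw [← hblock_len, List.drop_left]
    have hiter : durfeeStep^[d + 1] (block ++ rest) = [] := by
      rw [Function.iterate_succ_apply]
      have : durfeeStep (block ++ rest) = rest := by
        unfold durfeeStep
        rw [hds, hdrop]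
      rw [this]
      exact hrest_rok.2.2
    have hROK : ROK (d + 1) B (block ++ rest) := by
      refine ⟨hL_sorted, ?_, hiter⟩
      intro x hx
      rcases List.mem_append.mp hx with hx | hx
      · have := hblock_mem x hx; omega
      · have := hrest_mem x hx; omega
    have hsum : (block ++ rest).sum = ∑ i ∈ Finset.range B, f i := by
      rw [List.sum_append, ← hblock, sum_map_range]
      have e1 : ∑ i ∈ Finset.range m, (m + 1 + conjB (B - m) (fun j => f (m + j)) i)
          = m * (m + 1) + ∑ j ∈ Finset.range (B - m), f (m + j) := by
        rw [Finset.sum_add_distrib, Finset.sum_const, Finset.card_range, smul_eq_mul,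
          sum_conjB (fun j _ => hgle j)]
      rw [e1, ihsum]
      rw [sum_range_split f m B hmB]
      have e2 : ∑ i ∈ Finset.range m, f i
          = m * (m + 1) + ∑ i ∈ Finset.range m, (if i < m then f i - 2 * (i + 1) else 0) := by
        rw [← sum_two_mul m, ← Finset.sum_add_distrib]
        apply Finset.sum_congr rfl
        intro i hi
        simp only [Finset.mem_range] at hi
        rw [if_pos hi]
        have := hflow i hi
        omega
      rw [e2]
      omega
    have htoQ : toQ (d + 1) (block ++ rest) = f := by
      funext i
      show (if i < durfeeSize (block ++ rest) then
          2 * (i + 1) + toQ d ((block ++ rest).drop (durfeeSize (block ++ rest))) i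
        else conjB (durfeeSize (block ++ rest))
          (fun j => (block ++ rest).getD j 0 - (durfeeSize (block ++ rest) + 1))
          (i - durfeeSize (block ++ rest))) = f i
      rw [hds, hdrop]
      by_cases hi : i < m
      · rw [if_pos hi, ihall.2.2]
        simp only [if_pos hi]
        have := hflow i hi
        omega
      · rw [if_neg hi]
        have hfilter : conjB m (fun j => (block ++ rest).getD j 0 - (m + 1)) (i - m)
            = conjB m (conjB (B - m) (fun j => f (m + j))) (i - m) := by
          apply conjB_congr
          intro j hj
          rw [hL_getD_lt j hj]
          omega
        rw [hfilter, conjB_conjB hganti hgsupp hgle]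
        congr 1
        omega
    rw [hLdef]
    exact ⟨hROK, hsum, htoQ⟩

lemma mainRQ : ∀ d B L, ROK d B L →
    QOK d B (toQ d L) ∧ (∑ i ∈ Finset.range B, toQ d L i = L.sum)
      ∧ toR d B (toQ d L) = L := by
  intro d
  induction d with
  | zero =>
    intro B L hL
    have hnil : L = [] := hL.2.2
    subst hnil
    refine ⟨⟨fun i _ => by simp [toQ], fun i => by simp [toQ], by simp [toQ],
      fun i => by simp [toQ]⟩, by simp [toQ], by simp [toR]⟩
  | succ d ih =>
    intro B L hL
    obtain ⟨hsort, hmem, hiter⟩ := hL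
    obtain ⟨m, hm⟩ : ∃ m, durfeeSize L = m := ⟨_, rfl⟩
    have spec := durfeeSize_spec hsort
    have spec1 : ∀ i < m, i + 2 ≤ L.getD i 0 := fun i hi => spec.1 i (by omega)
    have spec2 : ∀ i, m ≤ i → L.getD i 0 ≤ i + 1 := fun i hi => spec.2 i (by omega)
    have hmlen : m ≤ L.length := hm ▸ durfeeSize_le_length L
    have hgetD_le : ∀ i, L.getD i 0 ≤ B + 1 := by
      intro i
      rcases Nat.lt_or_ge i L.length with hi | hi
      · have hmm : L.getD i 0 ∈ L := by
          rw [List.getD_eq_getElem _ _ hi]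
          exact List.getElem_mem hi
        exact (hmem _ hmm).2
      · rw [List.getD_eq_default _ _ hi]
        omega
    have hmB : m ≤ B := by
      rcases Nat.eq_zero_or_pos m with h0 | h0
      · omega
      · have h1 := spec1 (m - 1) (by omega)
        have h2 := hgetD_le (m - 1)
        omega
    have hLm_ge : ∀ i < m, m + 1 ≤ L.getD i 0 := by
      intro i hi
      have h1 := spec1 (m - 1) (by omega)
      have h2 := getD_anti hsort (show i ≤ m - 1 by omega)
      omega
    have hLm_le : ∀ j, m ≤ j → L.getD j 0 ≤ m + 1 := by
      intro j hj
      have h1 := getD_anti hsort hj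
      have h2 := spec2 m (le_refl m)
      omega
    have hμ_anti : ∀ i j, i ≤ j →
        L.getD j 0 - (m + 1) ≤ L.getD i 0 - (m + 1) := by
      intro i j hij
      have := getD_anti hsort hij
      omega
    have hμ_le : ∀ j, L.getD j 0 - (m + 1) ≤ B - m := by
      intro j
      have := hgetD_le j
      omega
    have hμ_supp : ∀ j, m ≤ j → L.getD j 0 - (m + 1) = 0 := by
      intro j hj
      have := hLm_le j hj
      omega
    obtain ⟨rest, hrest⟩ : ∃ r, L.drop m = r := ⟨_, rfl⟩
    have hrest_getD : ∀ j, rest.getD j 0 = L.getD (m + j) 0 := by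
      intro j
      rw [← hrest]
      rcases Nat.lt_or_ge (m + j) L.length with hj | hj
      · have hj' : j < (L.drop m).length := by
          rw [List.length_drop]
          omega
        rw [List.getD_eq_getElem _ _ hj', List.getD_eq_getElem _ _ hj]
        exact List.getElem_drop
      · have hj' : (L.drop m).length ≤ j := by
          rw [List.length_drop]
          omega
        rw [List.getD_eq_default _ _ hj', List.getD_eq_default _ _ hj]
    have hrest_rok : ROK d m rest := by
      refine ⟨?_, ?_, ?_⟩
      · rw [← hrest]
        exact List.Pairwise.sublist (List.drop_sublist m L) hsort
      · intro x hx
        refine ⟨(hmem x (by rw [← hrest] at hx; exact List.mem_of_mem_drop hx)).1, ?_⟩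
        obtain ⟨j, hj, hxe⟩ := List.getElem_of_mem hx
        have : rest.getD j 0 = x := by rw [List.getD_eq_getElem _ _ hj, hxe]
        rw [← this, hrest_getD j]
        exact hLm_le (m + j) (by omega)
      · rw [← hrest, ← hm]
        rw [Function.iterate_succ_apply] at hiter
        exact hiter
    have ihall := ih m rest hrest_rok
    have hfdef : toQ (d + 1) L = fun i =>
        if i < m then 2 * (i + 1) + toQ d rest i
        else conjB m (fun j => L.getD j 0 - (m + 1)) (i - m) := by
      rw [show toQ (d + 1) L = (fun i =>
          if i < durfeeSize L then 2 * (i + 1) + toQ d (L.drop (durfeeSize L)) i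
          else conjB (durfeeSize L) (fun j => L.getD j 0 - (durfeeSize L + 1))
            (i - durfeeSize L)) from rfl, hm, hrest]
    have hq := ihall.1
    have hQOK : QOK (d + 1) B (toQ (d + 1) L) := by
      rw [hfdef]
      refine ⟨?_, ?_, ?_, ?_⟩
      · intro i hi
        simp only [if_neg (by omega : ¬ i < m)]
        exact conjB_eq_zero hμ_le (by omega)
      · intro i
        by_cases hi : i < m
        · simp only [if_pos hi]
          rw [add_comm, Nat.add_mul_div_right _ _ (by omega : (0:ℕ) < i + 1)]
          rcases hq.2.1 i with ⟨c, hc⟩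
          exact ⟨c + 1, by omega⟩
        · simp only [if_neg hi]
          have := conjB_le m (fun j => L.getD j 0 - (m + 1)) (i - m)
          rw [Nat.div_eq_of_lt (by omega)]
          simpa using (Even.zero (α := ℕ))
      · by_cases h0 : 0 < m
        · simp only [if_pos h0]
          have := hq.2.2.1
          omega
        · simp only [if_neg (by omega : ¬ (0:ℕ) < m)]
          have := conjB_le m (fun j => L.getD j 0 - (m + 1)) (0 - m)
          omega
      · intro i
        by_cases hi1 : i + 1 < m
        · simp only [if_pos hi1, if_pos (by omega : i < m)]
          have halh := hq.2.2.2 i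
          nlinarith [halh]
        · by_cases hi2 : i < m
          · simp only [if_pos hi2, if_neg hi1]
            have h1 : conjB m (fun j => L.getD j 0 - (m + 1)) (i + 1 - m) ≤ m :=
              conjB_le _ _ _
            have hm1 : m = i + 1 := by omega
            nlinarith [h1]
          · simp only [if_neg hi2, if_neg hi1]
            have h3 : conjB m (fun j => L.getD j 0 - (m + 1)) (i + 1 - m)
                ≤ conjB m (fun j => L.getD j 0 - (m + 1)) (i - m) :=
              conjB_anti _ _ (by omega)
            calc (i + 1) * conjB m (fun j => L.getD j 0 - (m + 1)) (i + 1 - m)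
                ≤ (i + 1) * conjB m (fun j => L.getD j 0 - (m + 1)) (i - m) :=
                  Nat.mul_le_mul_left _ h3
              _ ≤ (i + 2) * conjB m (fun j => L.getD j 0 - (m + 1)) (i - m) :=
                  Nat.mul_le_mul_right _ (by omega)
    have hsum : ∑ i ∈ Finset.range B, toQ (d + 1) L i = L.sum := by
      rw [hfdef]
      have hsplit : ∑ i ∈ Finset.range B, (fun i =>
          if i < m then 2 * (i + 1) + toQ d rest i
          else conjB m (fun j => L.getD j 0 - (m + 1)) (i - m)) i
          = ∑ i ∈ Finset.range m, (2 * (i + 1) + toQ d rest i)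
            + ∑ j ∈ Finset.range (B - m), conjB m (fun j => L.getD j 0 - (m + 1)) j := by
        rw [sum_range_split _ m B hmB]
        congr 1
        · apply Finset.sum_congr rfl
          intro i hi
          simp only [Finset.mem_range] at hi
          simp only [if_pos hi]
        · apply Finset.sum_congr rfl
          intro j _
          simp only [if_neg (by omega : ¬ m + j < m)]
          congr 1
          omega
      rw [hsplit, sum_conjB (fun j _ => hμ_le j), Finset.sum_add_distrib, sum_two_mul,
        ihall.2.1]
      have hLsum : L.sum = (L.take m).sum + rest.sum := by
        rw [← hrest, ← List.sum_append, List.take_append_drop]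
      rw [hLsum, take_eq_map_range L m hmlen, sum_map_range]
      have e3 : ∑ i ∈ Finset.range m, L.getD i 0
          = m * (m + 1) + ∑ j ∈ Finset.range m, (L.getD j 0 - (m + 1)) := by
        have e4 : m * (m + 1) = ∑ _j ∈ Finset.range m, (m + 1) := by
          rw [Finset.sum_const, Finset.card_range, smul_eq_mul]
        rw [e4, ← Finset.sum_add_distrib]
        apply Finset.sum_congr rfl
        intro i hi
        simp only [Finset.mem_range] at hi
        have := hLm_ge i hi
        omega
      rw [e3]
      omega
    have hmQ : mQ (toQ (d + 1) L) = m := by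
      have hmem_m : m ∈ {j | toQ (d + 1) L j < 2 * (j + 1)} := by
        simp only [Set.mem_setOf_eq, hfdef]
        rw [if_neg (by omega)]
        have := conjB_le m (fun j => L.getD j 0 - (m + 1)) (m - m)
        omega
      have hnot : ∀ j < m, j ∉ {j | toQ (d + 1) L j < 2 * (j + 1)} := by
        intro j hj
        simp only [Set.mem_setOf_eq, hfdef, if_pos hj]
        omega
      refine le_antisymm (Nat.sInf_le hmem_m) ?_
      by_contra hc
      push_neg at hc
      exact hnot _ hc (Nat.sInf_mem ⟨m, hmem_m⟩)
    have htoR : toR (d + 1) B (toQ (d + 1) L) = L := by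
      rw [show toR (d + 1) B (toQ (d + 1) L) = ((List.range (mQ (toQ (d + 1) L))).map
          fun i => mQ (toQ (d + 1) L) + 1 + conjB (B - mQ (toQ (d + 1) L))
            (fun j => toQ (d + 1) L (mQ (toQ (d + 1) L) + j)) i)
          ++ toR d (mQ (toQ (d + 1) L))
            (fun i => if i < mQ (toQ (d + 1) L) then toQ (d + 1) L i - 2 * (i + 1) else 0)
          from rfl, hmQ]
      have hf'' : (fun i => if i < m then toQ (d + 1) L i - 2 * (i + 1) else 0)
          = toQ d rest := by
        funext i
        by_cases hi : i < m
        · rw [if_pos hi, hfdef]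
          simp only [if_pos hi]
          omega
        · rw [if_neg hi]
          exact (hq.1 i (by omega)).symm
      have htail : (fun j => toQ (d + 1) L (m + j))
          = conjB m (fun j => L.getD j 0 - (m + 1)) := by
        funext j
        rw [hfdef]
        simp only [if_neg (by omega : ¬ m + j < m)]
        congr 1
        omega
      rw [hf'', htail, ihall.2.2]
      have hmap : ((List.range m).map fun i => m + 1 + conjB (B - m)
          (conjB m (fun j => L.getD j 0 - (m + 1))) i)
          = (List.range m).map (fun i => L.getD i 0) := by
        apply List.map_congr_left
        intro i hi
        simp only [List.mem_range] at hi
        rw [conjB_conjB hμ_anti hμ_supp hμ_le]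
        have := hLm_ge i hi
        omega
      rw [hmap, ← take_eq_map_range L m hmlen, ← hrest, List.take_append_drop]
    exact ⟨hQOK, hsum, htoR⟩

lemma main1 (d B : ℕ) (f : ℕ → ℕ) (h : QOK d B f) :
    ROK d B (toR d B f) ∧ (toR d B f).sum = ∑ i ∈ Finset.range B, f i :=
  ⟨(mainQR d B f h).1, (mainQR d B f h).2.1⟩

lemma main2 (d B : ℕ) (L : List ℕ) (h : ROK d B L) :
    QOK d B (toQ d L) ∧ ∑ i ∈ Finset.range B, toQ d L i = L.sum :=
  ⟨(mainRQ d B L h).1, (mainRQ d B L h).2.1⟩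

lemma main3 (d B : ℕ) (f : ℕ → ℕ) (h : QOK d B f) : toQ d (toR d B f) = f :=
  (mainQR d B f h).2.2

lemma main4 (d B : ℕ) (L : List ℕ) (h : ROK d B L) : toR d B (toQ d L) = L :=
  (mainRQ d B L h).2.2


/-! ### Relating `Qset` to `QOK` -/

lemma qset_eq (k n : ℕ) (hk : 2 ≤ k) :
    Qset (2 * k - 2) n = {f | QOK (k - 1) n f ∧ ∑ i ∈ Finset.range n, f i = n} := by
  classical
  ext f
  simp only [Qset, Set.mem_setOf_eq]
  constructor
  · rintro ⟨⟨hfin, halh⟩, hf0, heven, hwt⟩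
    have hchain : ∀ i, f i = 0 → ∀ j, i ≤ j → f j = 0 := by
      intro i hi j hij
      induction j, hij using Nat.le_induction with
      | base => exact hi
      | succ j hij ih =>
        have h2 := halh j
        rw [ih] at h2
        have h3 : (j + 1) * f (j + 1) = 0 := by omega
        rcases Nat.mul_eq_zero.mp h3 with h4 | h4 <;> omega
    have hsupp : ∀ i, n ≤ i → f i = 0 := by
      intro i hi
      by_contra hne
      have hpos : ∀ j ≤ i, 0 < f j := by
        intro j hj
        rcases Nat.eq_zero_or_pos (f j) with h0 | hp
        · exact absurd (hchain j h0 i hj) hne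
        · exact hp
      have hsub : Finset.range (i + 1) ⊆ hfin.toFinset := by
        intro j hj
        simp only [Finset.mem_range] at hj
        simp only [Set.Finite.mem_toFinset, Function.mem_support]
        exact (hpos j (by omega)).ne'
      have hwt2 : wt f = ∑ j ∈ hfin.toFinset, f j := finsum_eq_sum f hfin
      have h1 : ∑ j ∈ Finset.range (i + 1), f j ≤ ∑ j ∈ hfin.toFinset, f j :=
        Finset.sum_le_sum_of_subset hsub
      have h2 : i + 1 ≤ ∑ j ∈ Finset.range (i + 1), f j := by
        calc i + 1 = ∑ _j ∈ Finset.range (i + 1), 1 := by simp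
        _ ≤ ∑ j ∈ Finset.range (i + 1), f j :=
          Finset.sum_le_sum (fun j hj => hpos j (by
            simp only [Finset.mem_range] at hj
            omega))
      rw [hwt] at hwt2
      omega
    have hss : Function.support f ⊆ ↑(Finset.range n) := by
      intro i hi
      simp only [Function.mem_support] at hi
      simp only [Finset.coe_range, Set.mem_Iio]
      by_contra hc
      exact hi (hsupp i (by omega))
    refine ⟨⟨hsupp, heven, by omega, halh⟩, ?_⟩
    have hw2 : wt f = ∑ i ∈ Finset.range n, f i := by
      rw [wt, finsum_eq_finset_sum_of_support_subset f hss]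
    rw [← hw2]
    exact hwt
  · rintro ⟨⟨hsupp, heven, hf0, halh⟩, hsum⟩
    have hss : Function.support f ⊆ ↑(Finset.range n) := by
      intro i hi
      simp only [Function.mem_support] at hi
      simp only [Finset.coe_range, Set.mem_Iio]
      by_contra hc
      exact hi (hsupp i (by omega))
    refine ⟨⟨Set.Finite.subset (Finset.range n).finite_toSet hss, halh⟩, by omega, heven, ?_⟩
    rw [wt, finsum_eq_finset_sum_of_support_subset f hss, hsum]

/-! ### Relating `Rset` to lists -/

def LSET (k n : ℕ) : Set (List ℕ) := {L | ROK (k - 1) n L ∧ L.sum = n}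

lemma rset_image (k n : ℕ) :
    (fun p : Nat.Partition n => (p.parts.sort (· ≤ ·)).reverse) '' Rset k n = LSET k n := by
  classical
  ext L
  constructor
  · rintro ⟨p, hp, rfl⟩
    have hsum : ((p.parts.sort (· ≤ ·)).reverse).sum = n := by
      rw [List.sum_reverse]
      have h1 : ((p.parts.sort (· ≤ ·) : List ℕ) : Multiset ℕ).sum = p.parts.sum := by
        rw [Multiset.sort_eq]
      rw [Multiset.sum_coe] at h1
      rw [h1, p.parts_sum]
    refine ⟨⟨?_, ?_, hp⟩, hsum⟩
    · rw [List.pairwise_reverse]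
      exact Multiset.pairwise_sort p.parts (· ≤ ·)
    · intro x hx
      rw [List.mem_reverse] at hx
      have hx2 : x ∈ p.parts := by
        rw [← Multiset.mem_sort (· ≤ ·)]
        exact hx
      refine ⟨p.parts_pos hx2, ?_⟩
      have h3 := Multiset.single_le_sum (fun y _ => Nat.zero_le y) x hx2
      rw [p.parts_sum] at h3
      omega
  · rintro ⟨⟨hsort, hmem, hiter⟩, hsum⟩
    have hrev : (Multiset.sort (↑L : Multiset ℕ) (· ≤ ·) : List ℕ) = L.reverse := by
      refine (fun hp h1 h2 => List.Perm.eq_of_pairwise' (r := ((· ≤ ·) : ℕ → ℕ → Prop)) h1 h2 hp) ?_ ?_ ?_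
      · have h1 : ((Multiset.sort (↑L : Multiset ℕ) (· ≤ ·) : List ℕ) : Multiset ℕ)
            = (↑L : Multiset ℕ) := Multiset.sort_eq _ _
        have h2 : List.Perm (Multiset.sort (↑L : Multiset ℕ) (· ≤ ·) : List ℕ) L :=
          Multiset.coe_eq_coe.mp h1
        exact h2.trans (List.reverse_perm L).symm
      · exact Multiset.pairwise_sort _ (· ≤ ·)
      · rw [List.pairwise_reverse]
        exact hsort
    have hpos : ∀ {x : ℕ}, x ∈ (↑L : Multiset ℕ) → 0 < x := by
      intro x hx
      exact (hmem x (by simpa using hx)).1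
    have hps : (↑L : Multiset ℕ).sum = n := by simpa using hsum
    refine ⟨⟨↑L, hpos, hps⟩, ?_, ?_⟩
    · show durfeeStep^[k - 1] ((Multiset.sort (↑L : Multiset ℕ) (· ≤ ·)).reverse) = []
      rw [hrev, List.reverse_reverse]
      exact hiter
    · show (Multiset.sort (↑L : Multiset ℕ) (· ≤ ·)).reverse = L
      rw [hrev, List.reverse_reverse]

lemma rset_inj (n : ℕ) :
    Function.Injective (fun p : Nat.Partition n => (p.parts.sort (· ≤ ·)).reverse) := by
  intro p q h
  apply Nat.Partition.ext
  have h1 := congrArg List.reverse h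
  simp only [List.reverse_reverse] at h1
  have h2 := congrArg (fun l : List ℕ => (↑l : Multiset ℕ)) h1
  simpa [Multiset.sort_eq] using h2

end ALHDurfee

/-- For `k ≥ 2` and `n ≥ 0`, the number of partitions of `n` with at most `k-1` successive
`N × (N+1)` Durfee rectangles and no part below the last Durfee rectangle equals the number of
anti-lecture hall compositions `λ` of `n` with `λ₁ ≤ 2k-2` and `⌊λ_i/i⌋` even for all `i`:
`|R_k(n)| = |Q_{2k-2}(n)|`. -/
theorem durfee_eq_even_alh (k n : ℕ) (hk : 2 ≤ k) :
    (Rset k n).ncard = (Qset (2 * k - 2) n).ncard := by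
  classical
  open ALHDurfee in
  have h1 : (Rset k n).ncard = (LSET k n).ncard := by
    rw [← rset_image k n]
    exact (Set.ncard_image_of_injective _ (rset_inj n)).symm
  have h2 : (LSET k n).ncard = (Qset (2 * k - 2) n).ncard := by
    rw [qset_eq k n hk]
    have himg : (toQ (k - 1)) '' LSET k n
        = {f | QOK (k - 1) n f ∧ ∑ i ∈ Finset.range n, f i = n} := by
      ext f
      constructor
      · rintro ⟨L, ⟨hL, hsum⟩, rfl⟩
        obtain ⟨hq, hs⟩ := main2 (k - 1) n L hL
        exact ⟨hq, by rw [hs, hsum]⟩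
      · rintro ⟨hq, hs⟩
        refine ⟨toR (k - 1) n f, ⟨(main1 (k - 1) n f hq).1, ?_⟩, main3 (k - 1) n f hq⟩
        rw [(main1 (k - 1) n f hq).2, hs]
    rw [← himg]
    refine (Set.ncard_image_of_injOn ?_).symm
    intro L1 h1' L2 h2' he
    have e1 := main4 (k - 1) n L1 h1'.1
    have e2 := main4 (k - 1) n L2 h2'.1
    rw [← e1, ← e2, he]
  rw [h1, h2]
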